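/- Let Γ and ψ(Z), ψ*(Z) be random variables all bounded in absolute value by M, where ψ*(Z) = E[Γ | Z]. Define X = (Γ - ψ(Z))² - (Γ - ψ*(Z))². Then E[X] = E[(ψ*(Z) - ψ(Z))²] ≥ 0 and Var(X) ≤ 16 M² E[X]. -/

import Mathlib

open MeasureTheory ProbabilityTheory

/-! Writing `D = ψ*(Z) - ψ(Z)`, one has `X = D² + 2 D (Γ - ψ*(Z))`, and the cross term integrates
to zero because `D` is `σ(Z)`-measurable and `ψ*(Z)` is the conditional expectation of `Γ`
given `σ(Z)`. For the variance, `X = D (2Γ - ψ(Z) - ψ*(Z))` with the second factor bounded by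
`4M`, so `Var X ≤ E[X²] ≤ 16 M² E[D²] = 16 M² E[X]`. -/

section CondExp

variable {Ω : Type*} {m m0 : MeasurableSpace Ω} {μ : Measure Ω}

theorem integral_mul_condExp_of_stronglyMeasurable (hm : m ≤ m0) [SigmaFinite (μ.trim hm)]
    {f g : Ω → ℝ} (hf : StronglyMeasurable[m] f) (hfg : Integrable (f * g) μ)
    (hg : Integrable g μ) :
    ∫ ω, f ω * μ[g | m] ω ∂μ = ∫ ω, f ω * g ω ∂μ :=
  calc ∫ ω, f ω * μ[g | m] ω ∂μ = ∫ ω, μ[f * g | m] ω ∂μ :=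
        integral_congr_ae (condExp_mul_of_stronglyMeasurable_left hf hfg hg).symm
    _ = ∫ ω, f ω * g ω ∂μ := integral_condExp hm

theorem integral_sq_sub_sub_sq_sub_condExp (hm : m ≤ m0) [IsFiniteMeasure μ]
    {Γ f : Ω → ℝ} (hΓ : MemLp Γ 2 μ) (hf : StronglyMeasurable[m] f) (hf₂ : MemLp f 2 μ) :
    ∫ ω, ((Γ ω - f ω) ^ 2 - (Γ ω - μ[Γ | m] ω) ^ 2) ∂μ = ∫ ω, (μ[Γ | m] ω - f ω) ^ 2 ∂μ := by
  set c := μ[Γ | m]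
  have hc : MemLp c 2 μ := hΓ.condExp one_le_two
  have hD : MemLp (c - f) 2 μ := hc.sub hf₂
  have hDΓ : Integrable ((c - f) * Γ) μ := hD.integrable_mul hΓ
  have hDc : Integrable ((c - f) * c) μ := hD.integrable_mul hc
  have horth : ∫ ω, ((c - f) * (Γ - c)) ω ∂μ = 0 := by
    rw [mul_sub, integral_sub' hDΓ hDc, sub_eq_zero]
    exact (integral_mul_condExp_of_stronglyMeasurable hm (stronglyMeasurable_condExp.sub hf) hDΓ
      (hΓ.integrable one_le_two)).symm
  calc ∫ ω, ((Γ ω - f ω) ^ 2 - (Γ ω - c ω) ^ 2) ∂μ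
      = ∫ ω, ((c - f) ω ^ 2 + 2 * ((c - f) * (Γ - c)) ω) ∂μ := by
        congr with ω
        simp only [Pi.sub_apply, Pi.mul_apply]
        ring
    _ = ∫ ω, (c - f) ω ^ 2 ∂μ + 2 * ∫ ω, ((c - f) * (Γ - c)) ω ∂μ := by
        rw [integral_add hD.integrable_sq ((hD.integrable_mul (hΓ.sub hc)).const_mul 2),
          integral_const_mul]
    _ = ∫ ω, (c ω - f ω) ^ 2 ∂μ := by
        rw [horth, mul_zero, add_zero]
        rfl

end CondExp

theorem variance_le_integral_of_sq_le {Ω : Type*} [MeasurableSpace Ω] {μ : Measure Ω}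
    [IsProbabilityMeasure μ] {X Y : Ω → ℝ} (hX : AEStronglyMeasurable X μ)
    (hY : Integrable Y μ) (hXY : ∀ᵐ ω ∂μ, X ω ^ 2 ≤ Y ω) :
    variance X μ ≤ ∫ ω, Y ω ∂μ :=
  (variance_le_expectation_sq hX).trans
    (integral_mono_of_nonneg (.of_forall fun ω => sq_nonneg (X ω)) hY hXY)

theorem sq_sub_sq_sub_sq_le {a b c M : ℝ} (ha : |a| ≤ M) (hb : |b| ≤ M) (hc : |c| ≤ M) :
    ((a - b) ^ 2 - (a - c) ^ 2) ^ 2 ≤ 16 * M ^ 2 * (c - b) ^ 2 := by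
  have hbound : (2 * a - b - c) ^ 2 ≤ (4 * M) ^ 2 := by
    apply sq_le_sq' <;> linarith [abs_le.mp ha, abs_le.mp hb, abs_le.mp hc]
  calc ((a - b) ^ 2 - (a - c) ^ 2) ^ 2 = (c - b) ^ 2 * (2 * a - b - c) ^ 2 := by ring
    _ ≤ (c - b) ^ 2 * (4 * M) ^ 2 := by gcongr
    _ = 16 * M ^ 2 * (c - b) ^ 2 := by ring

/-- If `Γ`, `ψ(Z)`, `ψ*(Z)` are bounded by `M` and `ψ*(Z) = E[Γ | σ(Z)]`, then
`X = (Γ - ψ(Z))² - (Γ - ψ*(Z))²` satisfies `E[X] = E[(ψ*(Z) - ψ(Z))²] ≥ 0` and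
`Var(X) ≤ 16 M² E[X]`. -/
theorem stmt1
    {Ω β : Type*} [MeasurableSpace Ω] [mβ : MeasurableSpace β]
    (μ : Measure Ω) [IsProbabilityMeasure μ]
    (M : ℝ)
    (Z : Ω → β) (hZ : Measurable Z)
    (Γ : Ω → ℝ) (hΓmeas : Measurable Γ) (hΓbd : ∀ᵐ ω ∂μ, |Γ ω| ≤ M)
    (ψ : β → ℝ) (hψmeas : Measurable ψ) (hψbd : ∀ z, |ψ z| ≤ M)
    (ψstar : Ω → ℝ)
    (hψstar : ψstar =ᵐ[μ] μ[Γ | MeasurableSpace.comap Z mβ])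
    (X : Ω → ℝ)
    (hX : ∀ ω, X ω = (Γ ω - ψ (Z ω))^2 - (Γ ω - ψstar ω)^2) :
    (∫ ω, X ω ∂μ = ∫ ω, (ψstar ω - ψ (Z ω))^2 ∂μ) ∧
    0 ≤ ∫ ω, X ω ∂μ ∧
    variance X μ ≤ 16 * M^2 * ∫ ω, X ω ∂μ := by
  have hm := hZ.comap_le
  have hΓ₂ : MemLp Γ 2 μ := .of_bound hΓmeas.aestronglyMeasurable M hΓbd
  have hψZ : StronglyMeasurable[MeasurableSpace.comap Z mβ] (fun ω => ψ (Z ω)) :=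
    (hψmeas.comp (comap_measurable Z)).stronglyMeasurable
  have hψZ₂ : MemLp (fun ω => ψ (Z ω)) 2 μ :=
    .of_bound (hψZ.mono hm).aestronglyMeasurable M (.of_forall fun ω => hψbd (Z ω))
  have hψstar₂ : MemLp ψstar 2 μ := (hΓ₂.condExp one_le_two).ae_eq hψstar.symm
  have hψstarbd : ∀ᵐ ω ∂μ, |ψstar ω| ≤ M := by
    filter_upwards [hψstar, ae_bdd_abs_condExp_of_ae_bdd_abs hΓbd] with ω h hc
    rwa [h]
  have hmean : ∫ ω, X ω ∂μ = ∫ ω, (ψstar ω - ψ (Z ω)) ^ 2 ∂μ := by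
    calc ∫ ω, X ω ∂μ
        = ∫ ω, ((Γ ω - ψ (Z ω)) ^ 2 - (Γ ω - μ[Γ | MeasurableSpace.comap Z mβ] ω) ^ 2) ∂μ :=
          integral_congr_ae (by filter_upwards [hψstar] with ω h; rw [hX, h])
      _ = ∫ ω, (μ[Γ | MeasurableSpace.comap Z mβ] ω - ψ (Z ω)) ^ 2 ∂μ :=
          integral_sq_sub_sub_sq_sub_condExp hm hΓ₂ hψZ hψZ₂
      _ = ∫ ω, (ψstar ω - ψ (Z ω)) ^ 2 ∂μ :=
          integral_congr_ae (by filter_upwards [hψstar] with ω h; rw [h])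
  refine ⟨hmean, hmean ▸ integral_nonneg fun ω => sq_nonneg _, ?_⟩
  have hXsq : ∀ᵐ ω ∂μ, X ω ^ 2 ≤ 16 * M ^ 2 * (ψstar ω - ψ (Z ω)) ^ 2 := by
    filter_upwards [hΓbd, hψstarbd] with ω hΓω hψω
    rw [hX]
    exact sq_sub_sq_sub_sq_le hΓω (hψbd _) hψω
  have hXmeas : AEStronglyMeasurable X μ := by
    rw [funext hX]
    exact ((hΓ₂.sub hψZ₂).aestronglyMeasurable.pow 2).sub
      ((hΓ₂.sub hψstar₂).aestronglyMeasurable.pow 2)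
  calc variance X μ ≤ ∫ ω, 16 * M ^ 2 * (ψstar ω - ψ (Z ω)) ^ 2 ∂μ :=
        variance_le_integral_of_sq_le hXmeas ((hψstar₂.sub hψZ₂).integrable_sq.const_mul _) hXsq
    _ = 16 * M ^ 2 * ∫ ω, X ω ∂μ := by rw [integral_const_mul, hmean]
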